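/- Let a < b be real numbers and define ν(z) = ((z−b)/(z−a))^{1/4} using the principal branch of the complex power, and N(z) = (1/(2ν(z)))·[[1, i],[−i, 1]] + (ν(z)/2)·[[1, −i],[i, 1]] (2×2 complex matrices). Then: (i) N is analytic on ℂ∖[a,b]; (ii) det N(z) = 1 for all z ∈ ℂ∖[a,b]; (iii) N(z) → I as z → ∞; and (iv) for every x ∈ (a,b) the boundary values N₊(x) = lim_{ε→0⁺} N(x+iε) and N₋(x) = lim_{ε→0⁺} N(x−iε) exist and satisfy N₊(x) = N₋(x)·[[0, 1],[−1, 0]]. That is, N solves the Riemann–Hilbert problem with constant jump [[0,1],[−1,0]] on (a,b) and N(∞) = I. -/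

import Mathlib

open Complex Filter Topology

/-- `ν(z) = ((z−b)/(z−a))^{1/4}`, principal branch of the complex power. -/
noncomputable def nuRH (a b : ℝ) (z : ℂ) : ℂ :=
  ((z - (b : ℂ)) / (z - (a : ℂ))) ^ ((1 : ℂ) / 4)

/-- The global parametrix `N(z) = (1/(2ν(z)))·[[1,i],[−i,1]] + (ν(z)/2)·[[1,−i],[i,1]]`. -/
noncomputable def NRH (a b : ℝ) (z : ℂ) : Matrix (Fin 2) (Fin 2) ℂ :=
  (1 / (2 * nuRH a b z)) • !![1, Complex.I; -Complex.I, 1] +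
    (nuRH a b z / 2) • !![1, -Complex.I; Complex.I, 1]

/-!
Write `N = P ∘ ν` with `P(w) = (1/(2w))·[[1,i],[−i,1]] + (w/2)·[[1,−i],[i,1]]`. Entrywise,
`P(w)` only involves `w⁻¹ ± w`, so `det P(w) = 1` for `w ≠ 0`, `P(1) = I` and
`P(i w) = P(w)·[[0,1],[−1,0]]`. The Möbius map `z ↦ (z−b)/(z−a)` sends `ℂ∖[a,b]` into the slit
plane, so `ν` is analytic and nonzero there, and it tends to `1` at `∞`. It preserves the upper and
lower half-planes and sends `x ∈ (a,b)` to a negative real, across which the principal logarithm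
jumps by `2πi`; hence the boundary values of `ν` satisfy `ν₊ = e^{iπ/2} ν₋ = i ν₋`.
-/

open Bornology Set
open scoped Real

noncomputable def parametrix (w : ℂ) : Matrix (Fin 2) (Fin 2) ℂ :=
  (1 / (2 * w)) • !![1, I; -I, 1] + (w / 2) • !![1, -I; I, 1]

lemma NRH_eq_parametrix_comp (a b : ℝ) : NRH a b = parametrix ∘ nuRH a b := rfl

lemma parametrix_eq (w : ℂ) : parametrix w =
    !![(w⁻¹ + w) / 2, I * (w⁻¹ - w) / 2; -I * (w⁻¹ - w) / 2, (w⁻¹ + w) / 2] := by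
  ext i j
  fin_cases i <;> fin_cases j <;> simp [parametrix] <;> ring

lemma parametrix_one : parametrix 1 = 1 := by
  rw [parametrix_eq, Matrix.one_fin_two]
  norm_num

lemma det_parametrix {w : ℂ} (hw : w ≠ 0) : (parametrix w).det = 1 := by
  rw [parametrix_eq, Matrix.det_fin_two_of]
  field_simp
  linear_combination (w ^ 4 - 2 * w ^ 2 + 1) * I_sq

lemma parametrix_I_mul (w : ℂ) :
    parametrix (I * w) = parametrix w * !![0, 1; -1, 0] := by
  rw [parametrix_eq, parametrix_eq, Matrix.mul_fin_two, mul_inv, inv_I]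
  ext i j
  fin_cases i <;> fin_cases j <;> simp [mul_sub, ← mul_assoc] <;> ring

lemma continuousAt_parametrix {w : ℂ} (hw : w ≠ 0) : ContinuousAt parametrix w := by
  unfold parametrix
  fun_prop (disch := simp [hw])

lemma analyticOnNhd_parametrix_apply (p q : Fin 2) :
    AnalyticOnNhd ℂ (fun w => parametrix w p q) {0}ᶜ := by
  intro w hw
  simp only [parametrix, Matrix.add_apply, Matrix.smul_apply, smul_eq_mul]
  fun_prop (disch := simpa using hw)

section Moebius

variable {a b : ℝ}

lemma div_sub_sub_mem_slitPlane (hab : a ≤ b) {z : ℂ} (hz : z ∉ ofReal '' Icc a b) :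
    (z - b) / (z - a) ∈ slitPlane := by
  have hza : z - a ≠ 0 := sub_ne_zero.2 fun h => hz ⟨a, ⟨le_rfl, hab⟩, h.symm⟩
  by_contra hw
  obtain ⟨t, ht, hwt⟩ : ∃ t : ℝ, t ≤ 0 ∧ (z - b) / (z - a) = t := by
    rw [mem_slitPlane_iff, not_or, not_lt, not_ne_iff] at hw
    exact ⟨_, hw.1, Complex.ext rfl hw.2⟩
  have h1t : 0 < 1 - t := by linarith
  -- `z - b = t (z - a)` puts `z` at the point `(b - t a) / (1 - t)` of `[a, b]`
  refine hz ⟨(b - t * a) / (1 - t), ⟨?_, ?_⟩, ?_⟩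
  · rw [le_div_iff₀ h1t]; nlinarith
  · rw [div_le_iff₀ h1t]; nlinarith
  · rw [div_eq_iff hza] at hwt
    have : (1 - t : ℂ) ≠ 0 := mod_cast h1t.ne'
    push_cast
    field_simp
    linear_combination -hwt

lemma im_div_sub_sub (z : ℂ) :
    ((z - b) / (z - a)).im = (b - a) * z.im / normSq (z - a) := by
  simp only [div_im, sub_im, ofReal_im, sub_zero, sub_re, ofReal_re]
  ring

lemma tendsto_div_sub_sub_cobounded (a b : ℂ) :
    Tendsto (fun z => (z - b) / (z - a)) (cobounded ℂ) (𝓝 1) := by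
  have hinv : Tendsto (fun z : ℂ => z⁻¹) (cobounded ℂ) (𝓝 0) := tendsto_inv₀_cobounded
  have h := ((hinv.const_mul b).const_sub 1).div ((hinv.const_mul a).const_sub 1) (by simp)
  simp only [mul_zero, sub_zero, div_one] at h
  refine h.congr' ?_
  filter_upwards [eventually_ne_cobounded 0] with z hz
  simp only [Pi.div_apply]
  field_simp

lemma continuousAt_div_sub_sub {x : ℂ} (hxa : x ≠ a) :
    ContinuousAt (fun z : ℂ => (z - b) / (z - a)) x :=
  (continuousAt_id.sub continuousAt_const).div (continuousAt_id.sub continuousAt_const)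
    (sub_ne_zero.2 hxa)

lemma tendsto_div_sub_sub_nhdsWithin_im_pos (hab : a ≤ b) {x : ℝ} (hxa : x ≠ a) :
    Tendsto (fun z : ℂ => (z - b) / (z - a)) (𝓝[{z | 0 < z.im}] x)
      (𝓝[{w | 0 ≤ w.im}] ((x - b) / (x - a))) := by
  refine (continuousAt_div_sub_sub (mod_cast hxa)).continuousWithinAt.tendsto_nhdsWithin
    fun z hz => ?_
  rw [mem_ofPred_eq, im_div_sub_sub]
  exact div_nonneg (mul_nonneg (sub_nonneg.2 hab) (le_of_lt hz)) (normSq_nonneg _)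

lemma tendsto_div_sub_sub_nhdsWithin_im_neg (hab : a < b) {x : ℝ} (hxa : x ≠ a) :
    Tendsto (fun z : ℂ => (z - b) / (z - a)) (𝓝[{z | z.im < 0}] x)
      (𝓝[{w | w.im < 0}] ((x - b) / (x - a))) := by
  refine (continuousAt_div_sub_sub (mod_cast hxa)).continuousWithinAt.tendsto_nhdsWithin
    fun z (hz : z.im < 0) => ?_
  have hza : z - a ≠ 0 := fun h => by simp [sub_eq_zero.1 h] at hz
  rw [mem_ofPred_eq, im_div_sub_sub]
  exact div_neg_of_neg_of_pos (mul_neg_of_pos_of_neg (sub_pos.2 hab) hz) (normSq_pos.2 hza)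

end Moebius

lemma tendsto_add_mul_I_nhdsWithin_Ioi (x : ℝ) :
    Tendsto (fun ε : ℝ => (x : ℂ) + ε * I) (𝓝[>] 0) (𝓝[{z | 0 < z.im}] x) := by
  have h : Tendsto (fun ε : ℝ => (x : ℂ) + ε * I) (𝓝 0) (𝓝 x) := by
    simpa using ((continuous_ofReal.tendsto 0).mul_const I).const_add (x : ℂ)
  exact tendsto_nhdsWithin_iff.2
    ⟨h.mono_left nhdsWithin_le_nhds, eventually_nhdsWithin_of_forall fun ε hε => by simpa⟩

lemma tendsto_sub_mul_I_nhdsWithin_Ioi (x : ℝ) :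
    Tendsto (fun ε : ℝ => (x : ℂ) - ε * I) (𝓝[>] 0) (𝓝[{z | z.im < 0}] x) := by
  have h : Tendsto (fun ε : ℝ => (x : ℂ) - ε * I) (𝓝 0) (𝓝 x) := by
    simpa using ((continuous_ofReal.tendsto 0).mul_const I).const_sub (x : ℂ)
  exact tendsto_nhdsWithin_iff.2
    ⟨h.mono_left nhdsWithin_le_nhds, eventually_nhdsWithin_of_forall fun ε hε => by simpa⟩

lemma tendsto_cpow_nhdsWithin_im_nonneg_of_re_neg_of_im_zero {w : ℂ} (hre : w.re < 0)
    (him : w.im = 0) (s : ℂ) :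
    Tendsto (· ^ s) (𝓝[{z | 0 ≤ z.im}] w) (𝓝 (exp ((Real.log ‖w‖ + π * I) * s))) := by
  have hw : w ≠ 0 := fun h => by simp [h] at hre
  refine ((continuous_exp.tendsto _).comp
    ((tendsto_log_nhdsWithin_im_nonneg_of_re_neg_of_im_zero hre him).mul_const s)).congr' ?_
  filter_upwards [nhdsWithin_le_nhds (isOpen_ne.mem_nhds hw)] with z hz
  exact (cpow_def_of_ne_zero hz s).symm

lemma tendsto_cpow_nhdsWithin_im_neg_of_re_neg_of_im_zero {w : ℂ} (hre : w.re < 0)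
    (him : w.im = 0) (s : ℂ) :
    Tendsto (· ^ s) (𝓝[{z | z.im < 0}] w) (𝓝 (exp ((Real.log ‖w‖ - π * I) * s))) := by
  have hw : w ≠ 0 := fun h => by simp [h] at hre
  refine ((continuous_exp.tendsto _).comp
    ((tendsto_log_nhdsWithin_im_neg_of_re_neg_of_im_zero hre him).mul_const s)).congr' ?_
  filter_upwards [nhdsWithin_le_nhds (isOpen_ne.mem_nhds hw)] with z hz
  exact (cpow_def_of_ne_zero hz s).symm

lemma exp_add_pi_mul_I_mul_quarter (L : ℂ) :
    exp ((L + π * I) * (1 / 4)) = I * exp ((L - π * I) * (1 / 4)) := by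
  calc exp ((L + π * I) * (1 / 4)) = exp (π / 2 * I + (L - π * I) * (1 / 4)) := by ring_nf
    _ = I * exp ((L - π * I) * (1 / 4)) := by rw [exp_add, exp_pi_div_two_mul_I]

section Nu

variable {a b : ℝ}

lemma nuRH_ne_zero (hab : a ≤ b) {z : ℂ} (hz : z ∉ ofReal '' Icc a b) : nuRH a b z ≠ 0 := by
  rw [nuRH, Ne, cpow_eq_zero_iff, not_and_or]
  exact .inl (slitPlane_ne_zero (div_sub_sub_mem_slitPlane hab hz))

lemma analyticOnNhd_nuRH (hab : a ≤ b) : AnalyticOnNhd ℂ (nuRH a b) (ofReal '' Icc a b)ᶜ :=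
  fun _ hz => ((analyticAt_id.sub analyticAt_const).div (analyticAt_id.sub analyticAt_const)
    (sub_ne_zero.2 fun h => hz ⟨a, ⟨le_rfl, hab⟩, h.symm⟩)).cpow analyticAt_const
    (div_sub_sub_mem_slitPlane hab hz)

lemma tendsto_nuRH_cobounded : Tendsto (nuRH a b) (cobounded ℂ) (𝓝 1) := by
  have h := (continuousAt_cpow_const (a := 1) (b := 1 / 4) (by simp)).tendsto.comp
    (tendsto_div_sub_sub_cobounded a b)
  rwa [one_cpow] at h

lemma exists_tendsto_nuRH_boundary (hab : a < b) {x : ℝ} (hx : x ∈ Ioo a b) :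
    ∃ ν ≠ 0, Tendsto (nuRH a b) (𝓝[{z | 0 < z.im}] x) (𝓝 (I * ν)) ∧
      Tendsto (nuRH a b) (𝓝[{z | z.im < 0}] x) (𝓝 ν) := by
  have hxa : x ≠ a := hx.1.ne'
  set w : ℂ := (x - b) / (x - a)
  have hw : w = ((x - b) / (x - a) : ℝ) := by push_cast; rfl
  have hre : w.re < 0 := by
    rw [hw, ofReal_re]; exact div_neg_of_neg_of_pos (by linarith [hx.2]) (by linarith [hx.1])
  have him : w.im = 0 := by rw [hw, ofReal_im]
  refine ⟨exp ((Real.log ‖w‖ - π * I) * (1 / 4)), exp_ne_zero _, ?_, ?_⟩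
  · rw [← exp_add_pi_mul_I_mul_quarter]
    exact (tendsto_cpow_nhdsWithin_im_nonneg_of_re_neg_of_im_zero hre him _).comp
      (tendsto_div_sub_sub_nhdsWithin_im_pos hab.le hxa)
  · exact (tendsto_cpow_nhdsWithin_im_neg_of_re_neg_of_im_zero hre him _).comp
      (tendsto_div_sub_sub_nhdsWithin_im_neg hab hxa)

end Nu

/-- **The global parametrix solves the Riemann–Hilbert problem with jump
`[[0,1],[−1,0]]` on `(a,b)` and `N(∞) = I`:** (i) `N` is analytic on `ℂ∖[a,b]`;
(ii) `det N = 1` there; (iii) `N(z) → I` as `z → ∞`; (iv) for `x ∈ (a,b)` the boundary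
values `N₊(x), N₋(x)` from above and below exist and satisfy
`N₊(x) = N₋(x)·[[0,1],[−1,0]]`. -/
theorem global_parametrix_RHP (a b : ℝ) (hab : a < b) :
    (∀ p q : Fin 2, AnalyticOnNhd ℂ (fun z => NRH a b z p q)
      ((fun t : ℝ => (t : ℂ)) '' Set.Icc a b)ᶜ) ∧
    (∀ z ∈ ((fun t : ℝ => (t : ℂ)) '' Set.Icc a b)ᶜ, (NRH a b z).det = 1) ∧
    Tendsto (NRH a b) (Bornology.cobounded ℂ) (nhds 1) ∧
    (∀ x ∈ Set.Ioo a b, ∃ Np Nm : Matrix (Fin 2) (Fin 2) ℂ,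
      Tendsto (fun ε : ℝ => NRH a b ((x : ℂ) + ε * Complex.I))
        (nhdsWithin 0 (Set.Ioi 0)) (nhds Np) ∧
      Tendsto (fun ε : ℝ => NRH a b ((x : ℂ) - ε * Complex.I))
        (nhdsWithin 0 (Set.Ioi 0)) (nhds Nm) ∧
      Np = Nm * !![0, 1; -1, 0]) := by
  rw [NRH_eq_parametrix_comp]
  refine ⟨fun p q => ?_, fun z hz => ?_, ?_, fun x hx => ?_⟩
  · exact (analyticOnNhd_parametrix_apply p q).comp (analyticOnNhd_nuRH hab.le)
      fun _ => nuRH_ne_zero hab.le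
  · exact det_parametrix (nuRH_ne_zero hab.le hz)
  · rw [← parametrix_one]
    exact (continuousAt_parametrix one_ne_zero).tendsto.comp tendsto_nuRH_cobounded
  · obtain ⟨ν, hν, hupper, hlower⟩ := exists_tendsto_nuRH_boundary hab hx
    refine ⟨parametrix (I * ν), parametrix ν, ?_, ?_, parametrix_I_mul ν⟩
    · exact (continuousAt_parametrix (mul_ne_zero I_ne_zero hν)).tendsto.comp
        (hupper.comp (tendsto_add_mul_I_nhdsWithin_Ioi x))
    · exact (continuousAt_parametrix hν).tendsto.comp
        (hlower.comp (tendsto_sub_mul_I_nhdsWithin_Ioi x))
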